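/- arXiv:2408.14336 — 6 statements merged into one kernel-verified Lean document; each statement's English description precedes it below -/
import Mathlib

section
/- Inductive step of belief invariance: fix a history h ∈ H and suppose w_{g•h}(g•s) = w_h(s) for all g ∈ G and s ∈ S. Then for every g ∈ G, a ∈ A, o ∈ Ω, and s' ∈ S, one has w_{(g•h)·(g•a, g•o)}(g•s') = w_{h·(a,o)}(s'). -/
open scoped NNReal

/-- A group-invariant POMDP over finite types of states `S`, actions `A`,
and observations `Ω`, with a group `G` acting on each. -/
structure GIPOMDP (G S A Ω : Type) [Group G] [MulAction G S] [MulAction G A] [MulAction G Ω]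
    [Fintype S] [Fintype A] [Fintype Ω] where
  b0 : S → ℝ≥0
  T : S → A → S → ℝ≥0
  R : S → A → ℝ
  O0 : S → Ω → ℝ≥0
  O : A → S → Ω → ℝ≥0
  b0_sum : ∑ s, b0 s = 1
  b0_inv : ∀ (g : G) (s : S), b0 (g • s) = b0 s
  T_sum : ∀ (s : S) (a : A), ∑ s', T s a s' = 1
  T_inv : ∀ (g : G) (s : S) (a : A) (s' : S), T (g • s) (g • a) (g • s') = T s a s'
  R_inv : ∀ (g : G) (s : S) (a : A), R (g • s) (g • a) = R s a
  O0_sum : ∀ s : S, ∑ o, O0 s o = 1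
  O0_inv : ∀ (g : G) (s : S) (o : Ω), O0 (g • s) (g • o) = O0 s o
  O_sum : ∀ (a : A) (s' : S), ∑ o, O a s' o = 1
  O_inv : ∀ (g : G) (a : A) (s' : S) (o : Ω), O (g • a) (g • s') (g • o) = O a s' o

/-- A history: an initial observation followed by a list of action–observation pairs. -/
abbrev Hist (A Ω : Type) : Type := Ω × List (A × Ω)

variable {G S A Ω : Type} [Group G] [MulAction G S] [MulAction G A] [MulAction G Ω]
  [Fintype S] [Fintype A] [Fintype Ω]

/-- Componentwise group action on histories. -/
def histAct (g : G) (h : Hist A Ω) : Hist A Ω :=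
  (g • h.1, h.2.map fun p => (g • p.1, g • p.2))

/-- Appending an action–observation pair to a history: `h·(a,o)`. -/
def snocH (h : Hist A Ω) (a : A) (o : Ω) : Hist A Ω :=
  (h.1, h.2 ++ [(a, o)])

/-- Unnormalized filter weight, by recursion on the reversed action–observation list. -/
noncomputable def wRev (P : GIPOMDP G S A Ω) (o0 : Ω) : List (A × Ω) → S → ℝ≥0
  | [] => fun s => P.b0 s * P.O0 s o0
  | (a, o) :: rest => fun s' => (∑ s, wRev P o0 rest s * P.T s a s') * P.O a s' o

/-- Unnormalized filter weight `w_h(s)`: `w_{(o0,[])}(s) = b0(s)·O0(s,o0)` and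
`w_{h·(a,o)}(s') = (Σ_s w_h(s)·T(s,a,s'))·O(a,s',o)`. -/
noncomputable def w (P : GIPOMDP G S A Ω) (h : Hist A Ω) (s : S) : ℝ≥0 :=
  wRev P h.1 h.2.reverse s

/-- Belief `Pr(s|h)`, with the convention that it is `0` when the weights sum to `0`. -/
noncomputable def belief (P : GIPOMDP G S A Ω) (h : Hist A Ω) (s : S) : ℝ≥0 :=
  if 0 < ∑ s', w P h s' then w P h s / ∑ s', w P h s' else 0

/-- Conditional observation probability `Pr(o|h,a) = Σ_s Pr(s|h)·Σ_{s'} T(s,a,s')·O(a,s',o)`. -/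
noncomputable def probObs (P : GIPOMDP G S A Ω) (h : Hist A Ω) (a : A) (o : Ω) : ℝ≥0 :=
  ∑ s, belief P h s * ∑ s', P.T s a s' * P.O a s' o

open Classical in
/-- History-MDP transition function: `T̄(h,a,h') = Pr(o|h,a)` if `h' = h·(a,o)` for some `o`,
and `0` otherwise. -/
noncomputable def Tbar (P : GIPOMDP G S A Ω) (h : Hist A Ω) (a : A) (h' : Hist A Ω) : ℝ≥0 :=
  ∑ o, if h' = snocH h a o then probObs P h a o else 0

/-- History-MDP reward function `R̄(h,a) = Σ_s Pr(s|h)·R(s,a)`. -/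
noncomputable def Rbar (P : GIPOMDP G S A Ω) (h : Hist A Ω) (a : A) : ℝ :=
  ∑ s, (belief P h s : ℝ) * P.R s a

/-- Bellman optimality operator of the History-MDP:
`(BQ)(h,a) = R̄(h,a) + γ·Σ_o Pr(o|h,a)·max_{a'} Q(h·(a,o), a')`. -/
noncomputable def bellman [Nonempty A] (P : GIPOMDP G S A Ω) (γ : ℝ)
    (Q : Hist A Ω × A → ℝ) : Hist A Ω × A → ℝ :=
  fun x => Rbar P x.1 x.2 + γ * ∑ o, (probObs P x.1 x.2 o : ℝ) *
    Finset.univ.sup' Finset.univ_nonempty (fun a' => Q (snocH x.1 x.2 o, a'))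

/-- Inductive step of belief invariance: if the filter weights at history `h` are
group-invariant, then so are the weights at any one-step extension `h·(a,o)`. -/
theorem w_snoc_invariant {G S A Ω : Type} [Group G] [MulAction G S] [MulAction G A] [MulAction G Ω]
    [Fintype S] [Fintype A] [Fintype Ω] [Nonempty S] [Nonempty A] [Nonempty Ω]
    (P : GIPOMDP G S A Ω)
    (h : Hist A Ω)
    (ih : ∀ (g : G) (s : S), w P (histAct g h) (g • s) = w P h s)
    (g : G) (a : A) (o : Ω) (s' : S) :
    w P (snocH (histAct g h) (g • a) (g • o)) (g • s') = w P (snocH h a o) s' := by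
  have key : ∀ (h' : Hist A Ω) (a' : A) (o' : Ω) (t : S),
      w P (snocH h' a' o') t = (∑ s, w P h' s * P.T s a' t) * P.O a' t o' := by
    intro h' a' o' t
    simp [w, snocH, wRev]
  rw [key, key]
  have ho : P.O (g • a) (g • s') (g • o) = P.O a s' o := P.O_inv g a s' o
  rw [ho]
  congr 1
  refine Fintype.sum_bijective (fun s : S => g⁻¹ • s) (MulAction.bijective g⁻¹) _ _ fun s => ?_
  rw [← ih g (g⁻¹ • s), smul_inv_smul, ← P.T_inv g (g⁻¹ • s) a s', smul_inv_smul]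
end

section
/- Invariance of the unnormalized filter weights for a group-invariant POMDP: for every history h ∈ H, every g ∈ G, and every s ∈ S, one has w_{g•h}(g•s) = w_h(s). -/
open scoped NNReal

variable {G S A Ω : Type} [Group G] [MulAction G S] [MulAction G A] [MulAction G Ω]
  [Fintype S] [Fintype A] [Fintype Ω]

lemma wRev_invariant {G S A Ω : Type} [Group G] [MulAction G S] [MulAction G A] [MulAction G Ω]
    [Fintype S] [Fintype A] [Fintype Ω]
    (P : GIPOMDP G S A Ω) (o0 : Ω) (g : G) :
    ∀ (l : List (A × Ω)) (s : S),
      wRev P (g • o0) (l.map fun p => (g • p.1, g • p.2)) (g • s) = wRev P o0 l s := by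
  intro l
  induction l with
  | nil => intro s; simp [wRev, P.b0_inv, P.O0_inv]
  | cons p rest ih =>
      intro s'
      obtain ⟨a, o⟩ := p
      simp only [List.map_cons, wRev]
      rw [P.O_inv, Fintype.sum_equiv (MulAction.toPerm (g : G) : Equiv.Perm S).symm _ (fun t => wRev P o0 rest t * P.T t a s')]
      intro t
      simp only [Equiv.symm_apply_apply, MulAction.toPerm_symm_apply]
      rw [← ih (g⁻¹ • t), smul_inv_smul, ← P.T_inv g (g⁻¹ • t) a s', smul_inv_smul]

/-- Invariance of the unnormalized filter weights for a group-invariant POMDP: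
for every history `h`, `g ∈ G` and `s ∈ S`, one has `w_{g•h}(g•s) = w_h(s)`. -/
theorem w_invariant {G S A Ω : Type} [Group G] [MulAction G S] [MulAction G A] [MulAction G Ω]
    [Fintype S] [Fintype A] [Fintype Ω] [Nonempty S] [Nonempty A] [Nonempty Ω]
    (P : GIPOMDP G S A Ω)
    (h : Hist A Ω) (g : G) (s : S) :
    w P (histAct g h) (g • s) = w P h s := by
  obtain ⟨o0, l⟩ := h
  simp only [w, histAct, ← List.map_reverse]
  exact wRev_invariant P o0 g l.reverse s
end

section
/- Lemma 1 (belief invariance): for a group-invariant POMDP, the belief function is group-invariant, i.e., for every history h ∈ H, every g ∈ G, and every s ∈ S, Pr(g•s | g•h) = Pr(s | h). -/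
open scoped NNReal

variable {G S A Ω : Type} [Group G] [MulAction G S] [MulAction G A] [MulAction G Ω]
  [Fintype S] [Fintype A] [Fintype Ω]

lemma wRev_inv {G S A Ω : Type} [Group G] [MulAction G S] [MulAction G A] [MulAction G Ω]
    [Fintype S] [Fintype A] [Fintype Ω] (P : GIPOMDP G S A Ω) (g : G) (o0 : Ω)
    (l : List (A × Ω)) (s : S) :
    wRev P (g • o0) (l.map fun p => (g • p.1, g • p.2)) (g • s) = wRev P o0 l s := by
  induction l generalizing s with
  | nil => simp [wRev, P.b0_inv, P.O0_inv]
  | cons p rest ih =>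
    obtain ⟨a, o⟩ := p
    simp only [List.map_cons, wRev]
    rw [P.O_inv]
    congr 1
    refine Fintype.sum_equiv (MulAction.toPerm g⁻¹ : Equiv.Perm S) _ _ fun s0 => ?_
    simp only [MulAction.toPerm_apply]
    rw [show s0 = g • (g⁻¹ • s0) by simp, ih, P.T_inv]
    simp

lemma w_inv {G S A Ω : Type} [Group G] [MulAction G S] [MulAction G A] [MulAction G Ω]
    [Fintype S] [Fintype A] [Fintype Ω] (P : GIPOMDP G S A Ω) (g : G) (h : Hist A Ω) (s : S) :
    w P (histAct g h) (g • s) = w P h s := by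
  unfold w histAct
  rw [← List.map_reverse]
  exact wRev_inv P g h.1 h.2.reverse s


/-- Lemma 1 (belief invariance): the belief function of a group-invariant POMDP is
group-invariant: Pr(g•s | g•h) = Pr(s | h). -/
theorem belief_invariant {G S A Ω : Type} [Group G] [MulAction G S] [MulAction G A] [MulAction G Ω]
    [Fintype S] [Fintype A] [Fintype Ω] [Nonempty S] [Nonempty A] [Nonempty Ω]
    (P : GIPOMDP G S A Ω)
    (h : Hist A Ω) (g : G) (s : S) :
    belief P (histAct g h) (g • s) = belief P h s := by
  have hsum : ∑ s', w P (histAct g h) s' = ∑ s', w P h s' := by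
    refine Fintype.sum_equiv (MulAction.toPerm g⁻¹ : Equiv.Perm S) _ _ fun s0 => ?_
    simp only [MulAction.toPerm_apply]
    rw [show s0 = g • (g⁻¹ • s0) by simp, w_inv]
    simp
  unfold belief
  rw [hsum, w_inv]
end

section
/- The History-MDP of a group-invariant POMDP is a group-invariant MDP: for every g ∈ G, histories h, h' ∈ H, and a ∈ A, both T̄(g•h, g•a, g•h') = T̄(h, a, h') and R̄(g•h, g•a) = R̄(h, a) hold. -/
open scoped NNReal

variable {G S A Ω : Type} [Group G] [MulAction G S] [MulAction G A] [MulAction G Ω]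
  [Fintype S] [Fintype A] [Fintype Ω]

/-!
Every quantity of the History-MDP is built from the POMDP kernels by products and by sums over
states or observations. Since each kernel is `G`-invariant and `s ↦ g • s` permutes the finite
state (and observation) type, reindexing each such sum by `g` shows, by induction on the history,
that `w_{g•h}(g•s) = w_h(s)`; the belief, `Pr(o|h,a)`, `T̄` and `R̄` inherit the invariance.
For `T̄` one also uses that `g` acts injectively on histories, so `g•h' = (g•h)·(g•a, g•o)` iff
`h' = h·(a,o)`.
-/

lemma wRev_smul (P : GIPOMDP G S A Ω) (g : G) (o0 : Ω) (l : List (A × Ω)) (s : S) :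
    wRev P (g • o0) (l.map fun p => (g • p.1, g • p.2)) (g • s) = wRev P o0 l s := by
  induction l generalizing s with
  | nil => simp only [List.map_nil, wRev, P.b0_inv, P.O0_inv]
  | cons p rest ih =>
    obtain ⟨a, o⟩ := p
    simp only [List.map_cons, wRev, P.O_inv]
    rw [← Equiv.sum_comp (MulAction.toPerm g)]
    simp only [MulAction.toPerm_apply, ih, P.T_inv]

lemma w_histAct (P : GIPOMDP G S A Ω) (g : G) (h : Hist A Ω) (s : S) :
    w P (histAct g h) (g • s) = w P h s := by
  rw [w, histAct, ← List.map_reverse]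
  exact wRev_smul P g h.1 h.2.reverse s

lemma sum_w_histAct (P : GIPOMDP G S A Ω) (g : G) (h : Hist A Ω) :
    ∑ s, w P (histAct g h) s = ∑ s, w P h s := by
  rw [← Equiv.sum_comp (MulAction.toPerm g)]
  exact Fintype.sum_congr _ _ (w_histAct P g h)

lemma belief_histAct (P : GIPOMDP G S A Ω) (g : G) (h : Hist A Ω) (s : S) :
    belief P (histAct g h) (g • s) = belief P h s := by
  simp only [belief, sum_w_histAct, w_histAct]

lemma probObs_histAct (P : GIPOMDP G S A Ω) (g : G) (h : Hist A Ω) (a : A) (o : Ω) :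
    probObs P (histAct g h) (g • a) (g • o) = probObs P h a o := by
  rw [probObs, ← Equiv.sum_comp (MulAction.toPerm g)]
  refine Fintype.sum_congr _ _ fun s => ?_
  rw [MulAction.toPerm_apply, belief_histAct, ← Equiv.sum_comp (MulAction.toPerm g)]
  simp only [MulAction.toPerm_apply, P.T_inv, P.O_inv]

lemma histAct_snocH {A Ω : Type} [MulAction G A] [MulAction G Ω] (g : G) (h : Hist A Ω) (a : A)
    (o : Ω) :
    histAct g (snocH h a o) = snocH (histAct g h) (g • a) (g • o) := by
  simp [histAct, snocH]

lemma histAct_inv_histAct {A Ω : Type} [MulAction G A] [MulAction G Ω] (g : G) (h : Hist A Ω) :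
    histAct g⁻¹ (histAct g h) = h := by
  simp [histAct, Function.comp_def]

lemma histAct_injective {A Ω : Type} [MulAction G A] [MulAction G Ω] (g : G) :
    Function.Injective (histAct (A := A) (Ω := Ω) g) :=
  Function.LeftInverse.injective (histAct_inv_histAct g)

lemma Tbar_histAct (P : GIPOMDP G S A Ω) (g : G) (h h' : Hist A Ω) (a : A) :
    Tbar P (histAct g h) (g • a) (histAct g h') = Tbar P h a h' := by
  classical
  rw [Tbar, ← Equiv.sum_comp (MulAction.toPerm g)]
  refine Fintype.sum_congr _ _ fun o => ?_
  simp only [MulAction.toPerm_apply, ← histAct_snocH, (histAct_injective g).eq_iff,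
    probObs_histAct]

lemma Rbar_histAct (P : GIPOMDP G S A Ω) (g : G) (h : Hist A Ω) (a : A) :
    Rbar P (histAct g h) (g • a) = Rbar P h a := by
  rw [Rbar, ← Equiv.sum_comp (MulAction.toPerm g)]
  simp only [MulAction.toPerm_apply, belief_histAct, P.R_inv, Rbar]

theorem historyMDP_invariant_general {G S A Ω : Type} [Group G] [MulAction G S] [MulAction G A] [MulAction G Ω]
    [Fintype S] [Fintype A] [Fintype Ω]
    (P : GIPOMDP G S A Ω)
    (g : G) (h h' : Hist A Ω) (a : A) :
    Tbar P (histAct g h) (g • a) (histAct g h') = Tbar P h a h' ∧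
      Rbar P (histAct g h) (g • a) = Rbar P h a :=
  ⟨Tbar_histAct P g h h' a, Rbar_histAct P g h a⟩

/-- The History-MDP of a group-invariant POMDP is a group-invariant MDP:
both T̄(g•h, g•a, g•h') = T̄(h, a, h') and R̄(g•h, g•a) = R̄(h, a). -/
theorem historyMDP_invariant {G S A Ω : Type} [Group G] [MulAction G S] [MulAction G A] [MulAction G Ω]
    [Fintype S] [Fintype A] [Fintype Ω] [Nonempty S] [Nonempty A] [Nonempty Ω]
    (P : GIPOMDP G S A Ω)
    (g : G) (h h' : Hist A Ω) (a : A) :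
    Tbar P (histAct g h) (g • a) (histAct g h') = Tbar P h a h' ∧
      Rbar P (histAct g h) (g • a) = Rbar P h a :=
  historyMDP_invariant_general P g h h' a
end

section
/- The Bellman optimality operator of the History-MDP of a group-invariant POMDP preserves group-invariance: if Q : H × A → ℝ is bounded and satisfies Q(g•h, g•a) = Q(h, a) for all g ∈ G, h ∈ H, a ∈ A, then (BQ)(g•h, g•a) = (BQ)(h, a) for all g ∈ G, h ∈ H, a ∈ A. -/
open scoped NNReal

variable {G S A Ω : Type} [Group G] [MulAction G S] [MulAction G A] [MulAction G Ω]
  [Fintype S] [Fintype A] [Fintype Ω]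

/-!
Every ingredient of the Bellman operator is built from `b0`, `T`, `R`, `O0`, `O` by products and
by sums over a finite set on which `G` acts by a bijection. Reindexing each such sum by `g`
shows, by induction along the history, that the filter weights are equivariant,
`w_{g•h}(g•s) = w_h(s)`; hence so are the belief, the observation probabilities and the expected
reward. The remaining maximum over `a'` and sum over `o` are reindexed by `g` in the same way.
-/

open Finset

theorem Fintype.sum_comp_smul {G X M : Type*} [Group G] [MulAction G X] [Fintype X]
    [AddCommMonoid M] (g : G) (f : X → M) : ∑ x, f (g • x) = ∑ x, f x :=
  Equiv.sum_comp (MulAction.toPerm g) f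

theorem Finset.univ_sup'_comp_smul {G X α : Type*} [Group G] [MulAction G X] [Fintype X]
    [Nonempty X] [SemilatticeSup α] (g : G) (f : X → α) :
    univ.sup' univ_nonempty (fun x => f (g • x)) = univ.sup' univ_nonempty f :=
  le_antisymm (sup'_le _ _ fun _ _ => le_sup' f (mem_univ _))
    (sup'_le _ _ fun x _ => by simpa using le_sup' (fun x => f (g • x)) (mem_univ (g⁻¹ • x)))

theorem snocH_histAct {G A Ω : Type} [Group G] [MulAction G A] [MulAction G Ω]
    (g : G) (h : Hist A Ω) (a : A) (o : Ω) :
    snocH (histAct g h) (g • a) (g • o) = histAct g (snocH h a o) := by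
  simp [snocH, histAct]

namespace GIPOMDP

variable (P : GIPOMDP G S A Ω) (g : G)

theorem wRev_smul (o0 : Ω) (l : List (A × Ω)) (s : S) :
    wRev P (g • o0) (l.map fun p => (g • p.1, g • p.2)) (g • s) = wRev P o0 l s := by
  induction l generalizing s with
  | nil => simp only [List.map_nil, wRev, P.b0_inv, P.O0_inv]
  | cons p l ih =>
    obtain ⟨a, o⟩ := p
    simp only [List.map_cons, wRev, P.O_inv]
    rw [← Fintype.sum_comp_smul g]
    simp only [ih, P.T_inv]

theorem w_histAct (h : Hist A Ω) (s : S) : w P (histAct g h) (g • s) = w P h s := by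
  simpa [w, histAct, List.map_reverse] using P.wRev_smul g h.1 h.2.reverse s

theorem belief_histAct (h : Hist A Ω) (s : S) :
    belief P (histAct g h) (g • s) = belief P h s := by
  have hsum : ∑ s', w P (histAct g h) s' = ∑ s', w P h s' := by
    rw [← Fintype.sum_comp_smul g]
    simp only [w_histAct]
  simp only [belief, hsum, w_histAct]

theorem probObs_histAct (h : Hist A Ω) (a : A) (o : Ω) :
    probObs P (histAct g h) (g • a) (g • o) = probObs P h a o := by
  unfold probObs
  rw [← Fintype.sum_comp_smul g]
  simp only [← Fintype.sum_comp_smul g (fun s' => P.T _ _ s' * P.O _ s' _), belief_histAct,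
    P.T_inv, P.O_inv]

theorem Rbar_histAct (h : Hist A Ω) (a : A) : Rbar P (histAct g h) (g • a) = Rbar P h a := by
  unfold Rbar
  rw [← Fintype.sum_comp_smul g]
  simp only [belief_histAct, P.R_inv]

end GIPOMDP

theorem bellman_preserves_invariance_general {G S A Ω : Type} [Group G] [MulAction G S] [MulAction G A] [MulAction G Ω]
    [Fintype S] [Fintype A] [Fintype Ω] [Nonempty A]
    (P : GIPOMDP G S A Ω)
    (γ : ℝ)
    (Q : Hist A Ω × A → ℝ)
    (hInv : ∀ (g : G) (h : Hist A Ω) (a : A), Q (histAct g h, g • a) = Q (h, a)) :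
    ∀ (g : G) (h : Hist A Ω) (a : A),
      bellman P γ Q (histAct g h, g • a) = bellman P γ Q (h, a) := by
  intro g h a
  have hmax : ∀ o : Ω,
      univ.sup' univ_nonempty (fun a' => Q (snocH (histAct g h) (g • a) (g • o), a')) =
        univ.sup' univ_nonempty (fun a' => Q (snocH h a o, a')) := by
    intro o
    rw [← univ_sup'_comp_smul g]
    simp only [snocH_histAct, hInv]
  simp only [bellman, P.Rbar_histAct]
  rw [← Fintype.sum_comp_smul g]
  simp only [P.probObs_histAct, hmax]

/-- The Bellman optimality operator of the History-MDP of a group-invariant POMDP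
preserves group-invariance of bounded Q-functions. -/
theorem bellman_preserves_invariance {G S A Ω : Type} [Group G] [MulAction G S] [MulAction G A] [MulAction G Ω]
    [Fintype S] [Fintype A] [Fintype Ω] [Nonempty S] [Nonempty A] [Nonempty Ω]
    (P : GIPOMDP G S A Ω)
    (γ : ℝ) (hγ0 : 0 ≤ γ) (hγ1 : γ < 1)
    (Q : Hist A Ω × A → ℝ) (hBdd : ∃ C : ℝ, ∀ x : Hist A Ω × A, |Q x| ≤ C)
    (hInv : ∀ (g : G) (h : Hist A Ω) (a : A), Q (histAct g h, g • a) = Q (h, a)) :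
    ∀ (g : G) (h : Hist A Ω) (a : A),
      bellman P γ Q (histAct g h, g • a) = bellman P γ Q (h, a) :=
  bellman_preserves_invariance_general P γ Q hInv
end

section
/- Existence of an equivariant deterministic greedy-optimal policy: let A be a finite nonempty type and H any type, each with an action of a group G, and let Q : H × A → ℝ satisfy Q(g•h, g•a) = Q(h, a) for all g ∈ G, h ∈ H, a ∈ A. If the action of G on H is free (i.e., g•h = h implies g = 1), then there exists a policy π : H → A such that π(g•h) = g•π(h) for all g ∈ G and h ∈ H, and Q(h, π(h)) = max_{a∈A} Q(h, a) for all h ∈ H. -/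
/-!
Pick a representative `r h` of every orbit and, by freeness, the unique `σ h ∈ G` with
`σ h • r h = h`. Choosing a greedy action `a` at each representative and setting
`π h = σ h • a` gives an equivariant policy, and invariance of `Q` turns the greedy action at
`r h` into a greedy action at `h`.
-/

open MulAction

section EquivariantSelection

variable {G H A : Type*} [Group G] [MulAction G H] [MulAction G A]

lemma smul_left_injective_of_free (hFree : ∀ (g : G) (h : H), g • h = h → g = 1) (x : H) :
    Function.Injective fun g : G => g • x := by
  intro g₁ g₂ hg
  have hfix : (g₂⁻¹ * g₁) • x = x := by
    simp only [mul_smul, hg, inv_smul_smul]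
  exact (inv_mul_eq_one.mp (hFree _ _ hfix)).symm

variable (G) in
noncomputable def orbitRep (h : H) : H :=
  (Quotient.mk (orbitRel G H) h).out

lemma orbitRep_smul (g : G) (h : H) : orbitRep G (g • h) = orbitRep G h := by
  unfold orbitRep
  rw [Quotient.sound (mem_orbit h g)]

lemma exists_smul_orbitRep_eq (h : H) : ∃ g : G, g • orbitRep G h = h := by
  obtain ⟨g, hg⟩ : orbitRep G h ∈ orbit G h := Quotient.mk_out (s := orbitRel G H) h
  exact ⟨g⁻¹, by rw [← hg, inv_smul_smul]⟩

theorem exists_equivariant_selection (S : H → Set A)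
    (hS : ∀ (g : G) (h : H) (a : A), a ∈ S h → g • a ∈ S (g • h))
    (hne : ∀ h, (S h).Nonempty) (hFree : ∀ (g : G) (h : H), g • h = h → g = 1) :
    ∃ π : H → A, (∀ (g : G) (h : H), π (g • h) = g • π h) ∧ ∀ h, π h ∈ S h := by
  choose σ hσ using exists_smul_orbitRep_eq (G := G) (H := H)
  have hσ_smul (g : G) (h : H) : σ (g • h) = g * σ h := by
    apply smul_left_injective_of_free hFree (orbitRep G h)
    have h₁ := hσ (g • h)
    rw [orbitRep_smul] at h₁
    simp only [h₁, mul_smul, hσ]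
  refine ⟨fun h => σ h • (hne (orbitRep G h)).some, fun g h => ?_, fun h => ?_⟩
  · simp only [hσ_smul, orbitRep_smul, mul_smul]
  · simpa only [hσ] using hS (σ h) _ _ (hne (orbitRep G h)).some_mem

end EquivariantSelection

section Greedy

variable {H A : Type*}

def greedyActions (Q : H × A → ℝ) (h : H) : Set A :=
  {a | ∀ b, Q (h, b) ≤ Q (h, a)}

lemma smul_mem_greedyActions {G : Type*} [Group G] [MulAction G H] [MulAction G A]
    {Q : H × A → ℝ} (hInv : ∀ (g : G) (h : H) (a : A), Q (g • h, g • a) = Q (h, a))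
    (g : G) {h : H} {a : A} (ha : a ∈ greedyActions Q h) :
    g • a ∈ greedyActions Q (g • h) := by
  intro b
  have hb := hInv g h (g⁻¹ • b)
  rw [smul_inv_smul] at hb
  rw [hb, hInv]
  exact ha _

variable [Fintype A] [Nonempty A]

lemma greedyActions_nonempty (Q : H × A → ℝ) (h : H) : (greedyActions Q h).Nonempty := by
  obtain ⟨a, -, ha⟩ := Finset.exists_max_image Finset.univ (fun a => Q (h, a))
    Finset.univ_nonempty
  exact ⟨a, fun b => ha b (Finset.mem_univ b)⟩

lemma eq_sup'_of_mem_greedyActions {Q : H × A → ℝ} {h : H} {a : A}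
    (ha : a ∈ greedyActions Q h) :
    Q (h, a) = Finset.univ.sup' Finset.univ_nonempty fun b : A => Q (h, b) :=
  le_antisymm (Finset.le_sup' (fun b => Q (h, b)) (Finset.mem_univ a))
    (Finset.sup'_le _ _ fun b _ => ha b)

end Greedy

/-- Existence of an equivariant deterministic greedy-optimal policy: if `Q` is
group-invariant and the action of `G` on `H` is free, then there is a policy
`π : H → A` that is equivariant and greedy-optimal for `Q`. -/
theorem exists_equivariant_greedy_policy {G H A : Type} [Group G] [MulAction G H]
    [MulAction G A] [Fintype A] [Nonempty A] (Q : H × A → ℝ)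
    (hInv : ∀ (g : G) (h : H) (a : A), Q (g • h, g • a) = Q (h, a))
    (hFree : ∀ (g : G) (h : H), g • h = h → g = 1) :
    ∃ π : H → A,
      (∀ (g : G) (h : H), π (g • h) = g • π h) ∧
        ∀ h : H, Q (h, π h) = Finset.univ.sup' Finset.univ_nonempty fun a : A => Q (h, a) := by
  obtain ⟨π, hπ, hgreedy⟩ := exists_equivariant_selection (greedyActions Q)
    (fun g _ _ => smul_mem_greedyActions hInv g) (greedyActions_nonempty Q) hFree
  exact ⟨π, hπ, fun h => eq_sup'_of_mem_greedyActions (hgreedy h)⟩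
end
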